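/- arXiv:1605.02336 — 3 statements merged into one kernel-verified Lean document; each statement's English description precedes it below -/
import Mathlib

section
/- (Complex first integral of the oscillator-related pdm Hamiltonian.) Let n ∈ ℝ, k_n = n − 1, and k₀, k₁, k₂ ∈ ℝ. Consider H_na' = T_n + k₀/r^{2k_n} + (1/r^{k_n})(k₁ cos(k_n φ) + k₂ sin(k_n φ)) on Ω = {r > 0}. With M_n = M_{n1} + i M_{n2}, where M_{n1} = r^{2k_n}(r² p_r² − p_φ²) + 2k₀/r^{2k_n} + (2/r^{k_n})(k₁ cos(k_n φ) + k₂ sin(k_n φ)) and M_{n2} = 2 r^{2n−1} p_r p_φ + (2/r^{k_n})(k₁ sin(k_n φ) − k₂ cos(k_n φ)), and N_φ = cos(2k_n φ) + i sin(2k_n φ), the complex function J₂₃ = M_n · (conj N_φ) is a constant of motion: {J₂₃, H_na'} = 0 at every point of Ω; equivalently its real and imaginary parts J₂ = Re(J₂₃) and J₃ = Im(J₂₃) satisfy {J₂, H_na'} = 0 and {J₃, H_na'} = 0. -/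
open Real

/-- Canonical Poisson bracket, extended to complex-valued functions on the phase
space Ω ⊆ ℝ⁴ with coordinates (r, φ, p_r, p_φ). -/
noncomputable def pbC (F G : ℝ → ℝ → ℝ → ℝ → ℂ) (r φ pr pφ : ℝ) : ℂ :=
  (deriv (fun x => F x φ pr pφ) r) * (deriv (fun x => G r φ x pφ) pr)
    - (deriv (fun x => F r φ x pφ) pr) * (deriv (fun x => G x φ pr pφ) r)
    + (deriv (fun x => F r x pr pφ) φ) * (deriv (fun x => G r φ pr x) pφ)
    - (deriv (fun x => F r φ pr x) pφ) * (deriv (fun x => G r x pr pφ) φ)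

/-- Kinetic Hamiltonian T_n = (1/2) r^(2n) (p_r² + p_φ²/r²) of the
position dependent mass m_n = 1/r^(2n). -/
noncomputable def Tkin (n : ℝ) (r φ pr pφ : ℝ) : ℝ :=
  (1/2) * r ^ (2*n) * (pr^2 + pφ^2 / r^2)

/-- Canonical Poisson bracket for real-valued functions on the phase space. -/
noncomputable def pb (F G : ℝ → ℝ → ℝ → ℝ → ℝ) (r φ pr pφ : ℝ) : ℝ :=
  (deriv (fun x => F x φ pr pφ) r) * (deriv (fun x => G r φ x pφ) pr)
    - (deriv (fun x => F r φ x pφ) pr) * (deriv (fun x => G x φ pr pφ) r)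
    + (deriv (fun x => F r x pr pφ) φ) * (deriv (fun x => G r φ pr x) pφ)
    - (deriv (fun x => F r φ pr x) pφ) * (deriv (fun x => G r x pr pφ) φ)

/-- The Hamiltonian H_na' = T_n + k₀/r^(2k_n) + (1/r^(k_n))(k₁ cos(k_n φ) + k₂ sin(k_n φ)),
regarded as a complex-valued function. -/
noncomputable def HnapC (n k0 k1 k2 : ℝ) (r φ pr pφ : ℝ) : ℂ :=
  ((Tkin n r φ pr pφ + k0 / r ^ (2*(n-1))
    + (1 / r ^ (n-1)) * (k1 * cos ((n-1)*φ) + k2 * sin ((n-1)*φ)) : ℝ) : ℂ)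

/-- The complex function M_n = M_{n1} + i M_{n2}. -/
noncomputable def Mn (n k0 k1 k2 : ℝ) (r φ pr pφ : ℝ) : ℂ :=
  ((r ^ (2*(n-1)) * (r^2 * pr^2 - pφ^2) + 2*k0 / r ^ (2*(n-1))
      + (2 / r ^ (n-1)) * (k1 * cos ((n-1)*φ) + k2 * sin ((n-1)*φ)) : ℝ) : ℂ)
    + Complex.I *
    ((2 * r ^ (2*n-1) * pr * pφ
      + (2 / r ^ (n-1)) * (k1 * sin ((n-1)*φ) - k2 * cos ((n-1)*φ)) : ℝ) : ℂ)

/-- The complex function N_φ = cos(2k_n φ) + i sin(2k_n φ). -/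
noncomputable def Nphi2 (n : ℝ) (r φ pr pφ : ℝ) : ℂ :=
  ((cos (2*(n-1)*φ) : ℝ) : ℂ) + Complex.I * ((sin (2*(n-1)*φ) : ℝ) : ℂ)

/-- The Hamiltonian H_na' as a real-valued function. -/
noncomputable def Hnap (n k0 k1 k2 : ℝ) (r φ pr pφ : ℝ) : ℝ :=
  Tkin n r φ pr pφ + k0 / r ^ (2*(n-1))
    + (1 / r ^ (n-1)) * (k1 * cos ((n-1)*φ) + k2 * sin ((n-1)*φ))

/-- The complex function J₂₃ = M_n · conj(N_φ). -/
noncomputable def J23 (n k0 k1 k2 : ℝ) (r φ pr pφ : ℝ) : ℂ :=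
  Mn n k0 k1 k2 r φ pr pφ * (starRingEnd ℂ) (Nphi2 n r φ pr pφ)

/-! Write `J₂₃ = M_n · e^{-2 i k_n φ}` and let `ω = ∂H/∂p_φ = r^{2k_n} p_φ` be the angular
velocity. The potential terms of `M_n` are tuned so that `M_n` turns at twice the angular phase,
`{M_n, H} = 2 i k_n ω M_n`, while `{e^{-2 i k_n φ}, H} = -2 i k_n ω e^{-2 i k_n φ}`; by the Leibniz
rule the two contributions to `{J₂₃, H}` cancel. As `H` is real, `{J₂₃, H} = {J₂, H} + i {J₃, H}`,
so the computation reduces to real brackets of the real and imaginary parts. -/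

structure HasPartialDerivsAt (F : ℝ → ℝ → ℝ → ℝ → ℝ) (Fr Fφ Fpr Fpφ r φ pr pφ : ℝ) : Prop where
  dr : HasDerivAt (fun x => F x φ pr pφ) Fr r
  dφ : HasDerivAt (fun x => F r x pr pφ) Fφ φ
  dpr : HasDerivAt (fun x => F r φ x pφ) Fpr pr
  dpφ : HasDerivAt (fun x => F r φ pr x) Fpφ pφ

namespace HasPartialDerivsAt

variable {F G : ℝ → ℝ → ℝ → ℝ → ℝ} {Fr Fφ Fpr Fpφ Gr Gφ Gpr Gpφ r φ pr pφ : ℝ}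

theorem add (hF : HasPartialDerivsAt F Fr Fφ Fpr Fpφ r φ pr pφ)
    (hG : HasPartialDerivsAt G Gr Gφ Gpr Gpφ r φ pr pφ) :
    HasPartialDerivsAt (F + G) (Fr + Gr) (Fφ + Gφ) (Fpr + Gpr) (Fpφ + Gpφ) r φ pr pφ :=
  ⟨hF.dr.add hG.dr, hF.dφ.add hG.dφ, hF.dpr.add hG.dpr, hF.dpφ.add hG.dpφ⟩

theorem sub (hF : HasPartialDerivsAt F Fr Fφ Fpr Fpφ r φ pr pφ)
    (hG : HasPartialDerivsAt G Gr Gφ Gpr Gpφ r φ pr pφ) :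
    HasPartialDerivsAt (F - G) (Fr - Gr) (Fφ - Gφ) (Fpr - Gpr) (Fpφ - Gpφ) r φ pr pφ :=
  ⟨hF.dr.sub hG.dr, hF.dφ.sub hG.dφ, hF.dpr.sub hG.dpr, hF.dpφ.sub hG.dpφ⟩

theorem mul (hF : HasPartialDerivsAt F Fr Fφ Fpr Fpφ r φ pr pφ)
    (hG : HasPartialDerivsAt G Gr Gφ Gpr Gpφ r φ pr pφ) :
    HasPartialDerivsAt (F * G) (Fr * G r φ pr pφ + F r φ pr pφ * Gr)
      (Fφ * G r φ pr pφ + F r φ pr pφ * Gφ) (Fpr * G r φ pr pφ + F r φ pr pφ * Gpr)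
      (Fpφ * G r φ pr pφ + F r φ pr pφ * Gpφ) r φ pr pφ :=
  ⟨hF.dr.mul hG.dr, hF.dφ.mul hG.dφ, hF.dpr.mul hG.dpr, hF.dpφ.mul hG.dpφ⟩

end HasPartialDerivsAt

theorem HasDerivAt.ofReal_add_I_mul {f g : ℝ → ℝ} {a b x : ℝ} (hf : HasDerivAt f a x)
    (hg : HasDerivAt g b x) :
    HasDerivAt (fun y => (f y : ℂ) + Complex.I * g y) (a + Complex.I * b) x :=
  hf.ofReal_comp.add (hg.ofReal_comp.const_mul Complex.I)

section Bracket

variable {F G H : ℝ → ℝ → ℝ → ℝ → ℝ}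
  {Fr Fφ Fpr Fpφ Gr Gφ Gpr Gpφ Hr Hφ Hpr Hpφ r φ pr pφ : ℝ}

theorem pb_eq_of_hasPartialDerivsAt (hF : HasPartialDerivsAt F Fr Fφ Fpr Fpφ r φ pr pφ)
    (hH : HasPartialDerivsAt H Hr Hφ Hpr Hpφ r φ pr pφ) :
    pb F H r φ pr pφ = Fr * Hpr - Fpr * Hr + Fφ * Hpφ - Fpφ * Hφ := by
  rw [pb, hF.dr.deriv, hF.dφ.deriv, hF.dpr.deriv, hF.dpφ.deriv,
    hH.dr.deriv, hH.dφ.deriv, hH.dpr.deriv, hH.dpφ.deriv]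

theorem pb_add_left (hF : HasPartialDerivsAt F Fr Fφ Fpr Fpφ r φ pr pφ)
    (hG : HasPartialDerivsAt G Gr Gφ Gpr Gpφ r φ pr pφ) (H : ℝ → ℝ → ℝ → ℝ → ℝ) :
    pb (F + G) H r φ pr pφ = pb F H r φ pr pφ + pb G H r φ pr pφ := by
  have hFG := hF.add hG
  simp only [pb, hFG.dr.deriv, hFG.dφ.deriv, hFG.dpr.deriv, hFG.dpφ.deriv,
    hF.dr.deriv, hF.dφ.deriv, hF.dpr.deriv, hF.dpφ.deriv,
    hG.dr.deriv, hG.dφ.deriv, hG.dpr.deriv, hG.dpφ.deriv]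
  ring

theorem pb_sub_left (hF : HasPartialDerivsAt F Fr Fφ Fpr Fpφ r φ pr pφ)
    (hG : HasPartialDerivsAt G Gr Gφ Gpr Gpφ r φ pr pφ) (H : ℝ → ℝ → ℝ → ℝ → ℝ) :
    pb (F - G) H r φ pr pφ = pb F H r φ pr pφ - pb G H r φ pr pφ := by
  have hFG := hF.sub hG
  simp only [pb, hFG.dr.deriv, hFG.dφ.deriv, hFG.dpr.deriv, hFG.dpφ.deriv,
    hF.dr.deriv, hF.dφ.deriv, hF.dpr.deriv, hF.dpφ.deriv,
    hG.dr.deriv, hG.dφ.deriv, hG.dpr.deriv, hG.dpφ.deriv]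
  ring

theorem pb_mul_left (hF : HasPartialDerivsAt F Fr Fφ Fpr Fpφ r φ pr pφ)
    (hG : HasPartialDerivsAt G Gr Gφ Gpr Gpφ r φ pr pφ) (H : ℝ → ℝ → ℝ → ℝ → ℝ) :
    pb (F * G) H r φ pr pφ
      = F r φ pr pφ * pb G H r φ pr pφ + G r φ pr pφ * pb F H r φ pr pφ := by
  have hFG := hF.mul hG
  simp only [pb, hFG.dr.deriv, hFG.dφ.deriv, hFG.dpr.deriv, hFG.dpφ.deriv,
    hF.dr.deriv, hF.dφ.deriv, hF.dpr.deriv, hF.dpφ.deriv,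
    hG.dr.deriv, hG.dφ.deriv, hG.dpr.deriv, hG.dpφ.deriv]
  ring

theorem pbC_ofReal_add_I_mul (hF : HasPartialDerivsAt F Fr Fφ Fpr Fpφ r φ pr pφ)
    (hG : HasPartialDerivsAt G Gr Gφ Gpr Gpφ r φ pr pφ)
    (hH : HasPartialDerivsAt H Hr Hφ Hpr Hpφ r φ pr pφ) :
    pbC (fun a b c d => (F a b c d : ℂ) + Complex.I * G a b c d) (fun a b c d => H a b c d)
        r φ pr pφ
      = pb F H r φ pr pφ + Complex.I * pb G H r φ pr pφ := by
  rw [pb_eq_of_hasPartialDerivsAt hF hH, pb_eq_of_hasPartialDerivsAt hG hH, pbC,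
    (hF.dr.ofReal_add_I_mul hG.dr).deriv, (hF.dφ.ofReal_add_I_mul hG.dφ).deriv,
    (hF.dpr.ofReal_add_I_mul hG.dpr).deriv, (hF.dpφ.ofReal_add_I_mul hG.dpφ).deriv,
    hH.dr.ofReal_comp.deriv, hH.dφ.ofReal_comp.deriv, hH.dpr.ofReal_comp.deriv,
    hH.dpφ.ofReal_comp.deriv]
  push_cast
  ring

end Bracket

section Rpow

variable {r : ℝ}

theorem rpow_two_mul_eq_sq (hr : 0 ≤ r) (a : ℝ) : r ^ (2 * a) = (r ^ a) ^ 2 := by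
  rw [mul_comm, rpow_mul hr, rpow_two]

theorem rpow_two_mul_eq_sq_sub_one_mul_sq (hr : 0 < r) (a : ℝ) :
    r ^ (2 * a) = (r ^ (a - 1)) ^ 2 * r ^ 2 := by
  rw [← rpow_two_mul_eq_sq hr.le, ← rpow_natCast, ← rpow_add hr]
  congr 1
  ring

end Rpow

noncomputable def MnRe (n k0 k1 k2 : ℝ) (r φ pr pφ : ℝ) : ℝ :=
  r ^ (2*(n-1)) * (r^2 * pr^2 - pφ^2) + 2*k0 / r ^ (2*(n-1))
    + (2 / r ^ (n-1)) * (k1 * cos ((n-1)*φ) + k2 * sin ((n-1)*φ))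

noncomputable def MnIm (n k1 k2 : ℝ) (r φ pr pφ : ℝ) : ℝ :=
  2 * r ^ (2*n-1) * pr * pφ + (2 / r ^ (n-1)) * (k1 * sin ((n-1)*φ) - k2 * cos ((n-1)*φ))

noncomputable def NphiRe (n : ℝ) (_r φ _pr _pφ : ℝ) : ℝ := cos (2*(n-1)*φ)

noncomputable def NphiIm (n : ℝ) (_r φ _pr _pφ : ℝ) : ℝ := sin (2*(n-1)*φ)

noncomputable def J₂ (n k0 k1 k2 : ℝ) : ℝ → ℝ → ℝ → ℝ → ℝ :=
  MnRe n k0 k1 k2 * NphiRe n + MnIm n k1 k2 * NphiIm n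

noncomputable def J₃ (n k0 k1 k2 : ℝ) : ℝ → ℝ → ℝ → ℝ → ℝ :=
  MnIm n k1 k2 * NphiRe n - MnRe n k0 k1 k2 * NphiIm n

section Model

variable {n k0 k1 k2 r φ pr pφ : ℝ}

theorem hasPartialDerivsAt_Hnap (hr : 0 < r) :
    HasPartialDerivsAt (Hnap n k0 k1 k2)
      (n * (r ^ (n-1)) ^ 2 * r * pr ^ 2 + (n-1) * (r ^ (n-1)) ^ 2 * pφ ^ 2 / r
        - 2 * (n-1) * k0 / ((r ^ (n-1)) ^ 2 * r)
        - (n-1) * (k1 * cos ((n-1)*φ) + k2 * sin ((n-1)*φ)) / (r ^ (n-1) * r))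
      (-(n-1) * (k1 * sin ((n-1)*φ) - k2 * cos ((n-1)*φ)) / r ^ (n-1))
      ((r ^ (n-1)) ^ 2 * r ^ 2 * pr)
      ((r ^ (n-1)) ^ 2 * pφ) r φ pr pφ := by
  have hu : 0 < r ^ (n-1) := rpow_pos_of_pos hr _
  have hp (p : ℝ) := hasDerivAt_rpow_const (p := p) (Or.inl hr.ne')
  have hlin : HasDerivAt (fun x : ℝ => (n-1) * x) (n-1) φ := hasDerivAt_const_mul _
  constructor <;> simp only [Hnap, Tkin]
  · refine (((hp (2*n)).const_mul (1/2)).mul ((hasDerivAt_const r (pr^2)).add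
      ((hasDerivAt_const r (pφ^2)).div (hasDerivAt_pow 2 r) (by positivity)))
      |>.add ((hasDerivAt_const r k0).div (hp (2*(n-1))) (by positivity))
      |>.add (((hasDerivAt_const r 1).div (hp (n-1)) hu.ne').mul_const _)).congr_deriv ?_
    simp only [Pi.add_apply, Pi.div_apply, rpow_sub_one hr.ne', rpow_two_mul_eq_sq hr.le]
    field_simp
    ring
  · refine (((hlin.cos.const_mul k1).add (hlin.sin.const_mul k2)).const_mul _
      |>.const_add _).congr_deriv ?_
    field_simp
    ring
  · refine ((((hasDerivAt_pow 2 pr).add_const (pφ^2 / r^2)).const_mul _).add_const _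
      |>.add_const _).congr_deriv ?_
    simp only [rpow_two_mul_eq_sq_sub_one_mul_sq hr]
    field_simp
    ring
  · refine ((((hasDerivAt_pow 2 pφ).div_const (r^2)).const_add (pr^2)).const_mul _
      |>.add_const _ |>.add_const _).congr_deriv ?_
    simp only [rpow_two_mul_eq_sq_sub_one_mul_sq hr]
    field_simp
    ring

theorem hasPartialDerivsAt_MnRe (hr : 0 < r) :
    HasPartialDerivsAt (MnRe n k0 k1 k2)
      (2 * n * (r ^ (n-1)) ^ 2 * r * pr ^ 2 - 2 * (n-1) * (r ^ (n-1)) ^ 2 * pφ ^ 2 / r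
        - 4 * (n-1) * k0 / ((r ^ (n-1)) ^ 2 * r)
        - 2 * (n-1) * (k1 * cos ((n-1)*φ) + k2 * sin ((n-1)*φ)) / (r ^ (n-1) * r))
      (-2 * (n-1) * (k1 * sin ((n-1)*φ) - k2 * cos ((n-1)*φ)) / r ^ (n-1))
      (2 * (r ^ (n-1)) ^ 2 * r ^ 2 * pr)
      (-2 * (r ^ (n-1)) ^ 2 * pφ) r φ pr pφ := by
  have hu : 0 < r ^ (n-1) := rpow_pos_of_pos hr _
  have hp (p : ℝ) := hasDerivAt_rpow_const (p := p) (Or.inl hr.ne')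
  have hlin : HasDerivAt (fun x : ℝ => (n-1) * x) (n-1) φ := hasDerivAt_const_mul _
  constructor <;> simp only [MnRe]
  · refine ((hp (2*(n-1))).mul (((hasDerivAt_pow 2 r).mul_const (pr^2)).sub_const (pφ^2))
      |>.add ((hasDerivAt_const r (2*k0)).div (hp (2*(n-1))) (by positivity))
      |>.add (((hasDerivAt_const r 2).div (hp (n-1)) hu.ne').mul_const _)).congr_deriv ?_
    simp only [rpow_sub_one hr.ne', rpow_two_mul_eq_sq hr.le]
    field_simp
    ring
  · refine (((hlin.cos.const_mul k1).add (hlin.sin.const_mul k2)).const_mul _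
      |>.const_add _).congr_deriv ?_
    field_simp
    ring
  · refine (((((hasDerivAt_pow 2 pr).const_mul (r^2)).sub_const (pφ^2)).const_mul _)
      |>.add_const _ |>.add_const _).congr_deriv ?_
    simp only [rpow_two_mul_eq_sq hr.le]
    ring
  · refine ((((hasDerivAt_pow 2 pφ).const_sub (r^2 * pr^2)).const_mul _)
      |>.add_const _ |>.add_const _).congr_deriv ?_
    simp only [rpow_two_mul_eq_sq hr.le]
    ring

theorem hasPartialDerivsAt_MnIm (hr : 0 < r) :
    HasPartialDerivsAt (MnIm n k1 k2)
      (2 * (2 * n - 1) * (r ^ (n-1)) ^ 2 * pr * pφ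
        - 2 * (n-1) * (k1 * sin ((n-1)*φ) - k2 * cos ((n-1)*φ)) / (r ^ (n-1) * r))
      (2 * (n-1) * (k1 * cos ((n-1)*φ) + k2 * sin ((n-1)*φ)) / r ^ (n-1))
      (2 * (r ^ (n-1)) ^ 2 * r * pφ)
      (2 * (r ^ (n-1)) ^ 2 * r * pr) r φ pr pφ := by
  have hu : 0 < r ^ (n-1) := rpow_pos_of_pos hr _
  have hp (p : ℝ) := hasDerivAt_rpow_const (p := p) (Or.inl hr.ne')
  have hlin : HasDerivAt (fun x : ℝ => (n-1) * x) (n-1) φ := hasDerivAt_const_mul _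
  constructor <;> simp only [MnIm]
  · refine ((((hp (2*n-1)).const_mul 2).mul_const pr).mul_const pφ
      |>.add (((hasDerivAt_const r 2).div (hp (n-1)) hu.ne').mul_const _)).congr_deriv ?_
    simp only [rpow_sub_one hr.ne', rpow_two_mul_eq_sq hr.le]
    field_simp
    ring
  · refine (((hlin.sin.const_mul k1).sub (hlin.cos.const_mul k2)).const_mul _
      |>.const_add _).congr_deriv ?_
    field_simp
    ring
  · refine ((((hasDerivAt_id pr).const_mul _).mul_const pφ).add_const _).congr_deriv ?_
    simp only [rpow_sub_one hr.ne', rpow_two_mul_eq_sq hr.le]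
    field_simp
  · refine (((hasDerivAt_id pφ).const_mul _).add_const _).congr_deriv ?_
    simp only [rpow_sub_one hr.ne', rpow_two_mul_eq_sq hr.le]
    field_simp

theorem hasPartialDerivsAt_NphiRe :
    HasPartialDerivsAt (NphiRe n) 0 (-(2 * (n-1)) * sin (2*(n-1)*φ)) 0 0 r φ pr pφ :=
  ⟨hasDerivAt_const _ _, (hasDerivAt_const_mul _).cos.congr_deriv (by ring),
    hasDerivAt_const _ _, hasDerivAt_const _ _⟩

theorem hasPartialDerivsAt_NphiIm :
    HasPartialDerivsAt (NphiIm n) 0 (2 * (n-1) * cos (2*(n-1)*φ)) 0 0 r φ pr pφ :=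
  ⟨hasDerivAt_const _ _, (hasDerivAt_const_mul _).sin.congr_deriv (by ring),
    hasDerivAt_const _ _, hasDerivAt_const _ _⟩

theorem pb_MnRe_Hnap (hr : 0 < r) :
    pb (MnRe n k0 k1 k2) (Hnap n k0 k1 k2) r φ pr pφ
      = -2 * (n-1) * (r ^ (2*(n-1)) * pφ) * MnIm n k1 k2 r φ pr pφ := by
  rw [pb_eq_of_hasPartialDerivsAt (hasPartialDerivsAt_MnRe hr) (hasPartialDerivsAt_Hnap hr),
    MnIm, rpow_two_mul_eq_sq hr.le, show 2 * n - 1 = 2 * (n - 1) + 1 by ring,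
    rpow_add_one hr.ne', rpow_two_mul_eq_sq hr.le]
  field_simp
  ring

theorem pb_MnIm_Hnap (hr : 0 < r) :
    pb (MnIm n k1 k2) (Hnap n k0 k1 k2) r φ pr pφ
      = 2 * (n-1) * (r ^ (2*(n-1)) * pφ) * MnRe n k0 k1 k2 r φ pr pφ := by
  rw [pb_eq_of_hasPartialDerivsAt (hasPartialDerivsAt_MnIm hr) (hasPartialDerivsAt_Hnap hr),
    MnRe, rpow_two_mul_eq_sq hr.le]
  field_simp
  ring

theorem pb_NphiRe_Hnap (hr : 0 < r) :
    pb (NphiRe n) (Hnap n k0 k1 k2) r φ pr pφ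
      = -2 * (n-1) * (r ^ (2*(n-1)) * pφ) * NphiIm n r φ pr pφ := by
  rw [pb_eq_of_hasPartialDerivsAt hasPartialDerivsAt_NphiRe (hasPartialDerivsAt_Hnap hr),
    NphiIm, rpow_two_mul_eq_sq hr.le]
  ring

theorem pb_NphiIm_Hnap (hr : 0 < r) :
    pb (NphiIm n) (Hnap n k0 k1 k2) r φ pr pφ
      = 2 * (n-1) * (r ^ (2*(n-1)) * pφ) * NphiRe n r φ pr pφ := by
  rw [pb_eq_of_hasPartialDerivsAt hasPartialDerivsAt_NphiIm (hasPartialDerivsAt_Hnap hr),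
    NphiRe, rpow_two_mul_eq_sq hr.le]
  ring

theorem pb_J₂_Hnap (hr : 0 < r) : pb (J₂ n k0 k1 k2) (Hnap n k0 k1 k2) r φ pr pφ = 0 := by
  have hMRe : HasPartialDerivsAt (MnRe n k0 k1 k2) _ _ _ _ r φ pr pφ := hasPartialDerivsAt_MnRe hr
  have hMIm : HasPartialDerivsAt (MnIm n k1 k2) _ _ _ _ r φ pr pφ := hasPartialDerivsAt_MnIm hr
  rw [J₂, pb_add_left (hMRe.mul hasPartialDerivsAt_NphiRe) (hMIm.mul hasPartialDerivsAt_NphiIm),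
    pb_mul_left hMRe hasPartialDerivsAt_NphiRe, pb_mul_left hMIm hasPartialDerivsAt_NphiIm,
    pb_MnRe_Hnap hr, pb_MnIm_Hnap hr, pb_NphiRe_Hnap hr, pb_NphiIm_Hnap hr]
  ring

theorem pb_J₃_Hnap (hr : 0 < r) : pb (J₃ n k0 k1 k2) (Hnap n k0 k1 k2) r φ pr pφ = 0 := by
  have hMRe : HasPartialDerivsAt (MnRe n k0 k1 k2) _ _ _ _ r φ pr pφ := hasPartialDerivsAt_MnRe hr
  have hMIm : HasPartialDerivsAt (MnIm n k1 k2) _ _ _ _ r φ pr pφ := hasPartialDerivsAt_MnIm hr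
  rw [J₃, pb_sub_left (hMIm.mul hasPartialDerivsAt_NphiRe) (hMRe.mul hasPartialDerivsAt_NphiIm),
    pb_mul_left hMIm hasPartialDerivsAt_NphiRe, pb_mul_left hMRe hasPartialDerivsAt_NphiIm,
    pb_MnRe_Hnap hr, pb_MnIm_Hnap hr, pb_NphiRe_Hnap hr, pb_NphiIm_Hnap hr]
  ring

theorem J23_re : (J23 n k0 k1 k2 r φ pr pφ).re = J₂ n k0 k1 k2 r φ pr pφ := by
  simp only [J23, Mn, Nphi2, J₂, MnRe, MnIm, NphiRe, NphiIm, Pi.add_apply, Pi.mul_apply,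
    Complex.mul_re, Complex.mul_im, Complex.add_re, Complex.add_im, Complex.conj_re,
    Complex.conj_im, Complex.ofReal_re, Complex.ofReal_im, Complex.I_re, Complex.I_im]
  ring

theorem J23_im : (J23 n k0 k1 k2 r φ pr pφ).im = J₃ n k0 k1 k2 r φ pr pφ := by
  simp only [J23, Mn, Nphi2, J₃, MnRe, MnIm, NphiRe, NphiIm, Pi.sub_apply, Pi.mul_apply,
    Complex.mul_re, Complex.mul_im, Complex.add_re, Complex.add_im, Complex.conj_re,
    Complex.conj_im, Complex.ofReal_re, Complex.ofReal_im, Complex.I_re, Complex.I_im]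
  ring

theorem J23_eq_ofReal_add_I_mul :
    J23 n k0 k1 k2
      = fun a b c d => (J₂ n k0 k1 k2 a b c d : ℂ) + Complex.I * J₃ n k0 k1 k2 a b c d := by
  funext a b c d
  apply Complex.ext <;> simp [J23_re, J23_im]

theorem pbC_J23_HnapC (hr : 0 < r) :
    pbC (J23 n k0 k1 k2) (HnapC n k0 k1 k2) r φ pr pφ
      = pb (J₂ n k0 k1 k2) (Hnap n k0 k1 k2) r φ pr pφ
        + Complex.I * pb (J₃ n k0 k1 k2) (Hnap n k0 k1 k2) r φ pr pφ := by
  have hMRe : HasPartialDerivsAt (MnRe n k0 k1 k2) _ _ _ _ r φ pr pφ := hasPartialDerivsAt_MnRe hr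
  have hMIm : HasPartialDerivsAt (MnIm n k1 k2) _ _ _ _ r φ pr pφ := hasPartialDerivsAt_MnIm hr
  rw [J23_eq_ofReal_add_I_mul]
  exact pbC_ofReal_add_I_mul
    ((hMRe.mul hasPartialDerivsAt_NphiRe).add (hMIm.mul hasPartialDerivsAt_NphiIm))
    ((hMIm.mul hasPartialDerivsAt_NphiRe).sub (hMRe.mul hasPartialDerivsAt_NphiIm))
    (hasPartialDerivsAt_Hnap hr)

end Model

/-- J₂₃ = M_n conj(N_φ) is a (complex) constant of motion of H_na' on Ω = {r > 0};
equivalently its real and imaginary parts are real constants of motion. -/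
theorem J23_constant_of_motion (n k0 k1 k2 : ℝ) :
    ∀ r φ pr pφ : ℝ, 0 < r →
      pbC (J23 n k0 k1 k2) (HnapC n k0 k1 k2) r φ pr pφ = 0 ∧
      pb (fun r φ pr pφ => (J23 n k0 k1 k2 r φ pr pφ).re)
         (Hnap n k0 k1 k2) r φ pr pφ = 0 ∧
      pb (fun r φ pr pφ => (J23 n k0 k1 k2 r φ pr pφ).im)
         (Hnap n k0 k1 k2) r φ pr pφ = 0 := by
  intro r φ pr pφ hr
  refine ⟨?_, ?_, ?_⟩
  · simp [pbC_J23_HnapC hr, pb_J₂_Hnap hr, pb_J₃_Hnap hr]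
  · simpa only [J23_re] using pb_J₂_Hnap hr
  · simpa only [J23_im] using pb_J₃_Hnap hr
end

section
/- Let n ∈ ℝ, k_n = n − 1, and k₀, k₁, k₂ ∈ ℝ. On Ω = {r > 0}, define J_a3' = 2k₀ p_φ + k₂ P₁ − k₁ P₂ and the two real functions J₂ = r^{2(n−1)}[(r² p_r² − p_φ²) cos(2k_n φ) + 2 r p_r p_φ sin(2k_n φ)] + (2k₀/r^{2k_n}) cos(2k_n φ) + (2/r^{k_n})(k₁ cos(k_n φ) − k₂ sin(k_n φ)) and J₃ = r^{2(n−1)}[(r² p_r² − p_φ²) sin(2k_n φ) − 2 r p_r p_φ cos(2k_n φ)] + (2k₀/r^{2k_n}) sin(2k_n φ) + (2/r^{k_n})(k₁ sin(k_n φ) + k₂ cos(k_n φ)). Then at every point of Ω: {J_a3', J₂} = 4(n − 1)(k₀ J₃ + k₁ k₂) and {J_a3', J₃} = −2(n − 1)(2k₀ J₂ + k₁² − k₂²). -/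
open Real

/-- Noether momentum P₁ = rⁿ (p_r cos(k_n φ) + (p_φ/r) sin(k_n φ)), k_n = n − 1. -/
noncomputable def P1 (n : ℝ) (r φ pr pφ : ℝ) : ℝ :=
  r ^ n * (pr * cos ((n-1)*φ) + (pφ / r) * sin ((n-1)*φ))

/-- Noether momentum P₂ = rⁿ (p_r sin(k_n φ) − (p_φ/r) cos(k_n φ)), k_n = n − 1. -/
noncomputable def P2 (n : ℝ) (r φ pr pφ : ℝ) : ℝ :=
  r ^ n * (pr * sin ((n-1)*φ) - (pφ / r) * cos ((n-1)*φ))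

/-- J₂: real part of the complex integral M_n conj(N_φ). -/
noncomputable def J2fun (n k0 k1 k2 : ℝ) (r φ pr pφ : ℝ) : ℝ :=
  r ^ (2*(n-1)) * ((r^2 * pr^2 - pφ^2) * cos (2*(n-1)*φ)
      + 2 * r * pr * pφ * sin (2*(n-1)*φ))
    + (2*k0 / r ^ (2*(n-1))) * cos (2*(n-1)*φ)
    + (2 / r ^ (n-1)) * (k1 * cos ((n-1)*φ) - k2 * sin ((n-1)*φ))

/-- J₃: imaginary part of the complex integral M_n conj(N_φ). -/
noncomputable def J3fun (n k0 k1 k2 : ℝ) (r φ pr pφ : ℝ) : ℝ :=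
  r ^ (2*(n-1)) * ((r^2 * pr^2 - pφ^2) * sin (2*(n-1)*φ)
      - 2 * r * pr * pφ * cos (2*(n-1)*φ))
    + (2*k0 / r ^ (2*(n-1))) * sin (2*(n-1)*φ)
    + (2 / r ^ (n-1)) * (k1 * sin ((n-1)*φ) + k2 * cos ((n-1)*φ))

/-- The linear integral J_a3' = 2k₀ p_φ + k₂ P₁ − k₁ P₂. -/
noncomputable def Ja3p (n k0 k1 k2 : ℝ) (r φ pr pφ : ℝ) : ℝ :=
  2 * k0 * pφ + k2 * P1 n r φ pr pφ - k1 * P2 n r φ pr pφ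

/-! The two brackets are one computation. `J₂ + i J₃` is the complex function
`t² (r p_r - i p_φ)² e^{2iθ} + 2 k₀ e^{2iθ} / t² + 2 (k₁ + i k₂) e^{iθ} / t`
with `t = r^{k_n}`, `θ = k_n φ`, so `J₂`, `J₃` and `-J₂` are the real parts of its
rotations by `e^{-iψ}`, `ψ = 0, π/2, π`. For the rotated function, the terms of `{J_a3', ·}`
of order `t³` cancel identically, and the rest collapses by the subtraction formulas
for `cos` and `sin`. -/

lemma hasDerivAt_rpow_const_of_pos {a r : ℝ} (hr : 0 < r) :
    HasDerivAt (fun x : ℝ => x ^ a) (a * r ^ a / r) r := by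
  simpa [rpow_sub_one hr.ne', mul_div_assoc] using hasDerivAt_rpow_const (p := a) (Or.inl hr.ne')

lemma hasDerivAt_cos_mul_sub (a b x : ℝ) :
    HasDerivAt (fun y => cos (a * y - b)) (-(a * sin (a * x - b))) x := by
  simpa [mul_comm] using (((hasDerivAt_id x).const_mul a).sub_const b).cos

lemma hasDerivAt_sin_mul_sub (a b x : ℝ) :
    HasDerivAt (fun y => sin (a * y - b)) (a * cos (a * x - b)) x := by
  simpa [mul_comm] using (((hasDerivAt_id x).const_mul a).sub_const b).sin

lemma rpow_eq_rpow_sub_one_mul {r : ℝ} (hr : r ≠ 0) (a : ℝ) : r ^ a = r ^ (a - 1) * r := by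
  rw [rpow_sub_one hr]
  field_simp

lemma rpow_two_mul {r : ℝ} (hr : 0 ≤ r) (a : ℝ) : r ^ (2 * a) = (r ^ a) ^ 2 := by
  rw [mul_comm, rpow_mul hr, rpow_two]

/-- `Re (e^{-iψ} (J₂ + i J₃))`. -/
noncomputable def rotJ (n k0 k1 k2 ψ : ℝ) (r φ pr pφ : ℝ) : ℝ :=
  r ^ (2*(n-1)) * ((r^2 * pr^2 - pφ^2) * cos (2*(n-1)*φ - ψ)
      + 2 * r * pr * pφ * sin (2*(n-1)*φ - ψ))
    + (2*k0 / r ^ (2*(n-1))) * cos (2*(n-1)*φ - ψ)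
    + (2 / r ^ (n-1)) * (k1 * cos ((n-1)*φ - ψ) - k2 * sin ((n-1)*φ - ψ))

lemma J2fun_eq_rotJ (n k0 k1 k2 : ℝ) : J2fun n k0 k1 k2 = rotJ n k0 k1 k2 0 := by
  funext r φ pr pφ
  simp only [J2fun, rotJ, sub_zero]

lemma J3fun_eq_rotJ (n k0 k1 k2 : ℝ) : J3fun n k0 k1 k2 = rotJ n k0 k1 k2 (π / 2) := by
  funext r φ pr pφ
  simp only [J3fun, rotJ, cos_sub_pi_div_two, sin_sub_pi_div_two]
  ring

lemma rotJ_pi (n k0 k1 k2 r φ pr pφ : ℝ) :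
    rotJ n k0 k1 k2 π r φ pr pφ = -rotJ n k0 k1 k2 0 r φ pr pφ := by
  simp only [rotJ, cos_sub_pi, sin_sub_pi, sub_zero]
  ring

section PoissonBrackets

variable {n k0 k1 k2 ψ r φ pr pφ : ℝ}

lemma hasDerivAt_Ja3p_r (hr : 0 < r) :
    HasDerivAt (fun x => Ja3p n k0 k1 k2 x φ pr pφ)
      (r ^ n / r * (n * pr * (k2 * cos ((n-1)*φ) - k1 * sin ((n-1)*φ))
        + (n-1) * pφ / r * (k2 * sin ((n-1)*φ) + k1 * cos ((n-1)*φ)))) r := by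
  have hpow := hasDerivAt_rpow_const_of_pos (a := n) hr
  have hinv := (hasDerivAt_const r pφ).div (hasDerivAt_id r) hr.ne'
  have hP1 := hpow.mul ((hinv.mul_const (sin ((n-1)*φ))).const_add (pr * cos ((n-1)*φ)))
  have hP2 := hpow.mul ((hinv.mul_const (cos ((n-1)*φ))).const_sub (pr * sin ((n-1)*φ)))
  refine (((hP1.const_mul k2).const_add (2*k0*pφ)).sub (hP2.const_mul k1)).congr_deriv ?_
  simp only [Pi.div_apply, id]
  field_simp
  ring

lemma hasDerivAt_Ja3p_pr :
    HasDerivAt (fun x => Ja3p n k0 k1 k2 r φ x pφ)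
      (r ^ n * (k2 * cos ((n-1)*φ) - k1 * sin ((n-1)*φ))) pr := by
  have hP1 := ((((hasDerivAt_id pr).mul_const (cos ((n-1)*φ))).add_const
      (pφ / r * sin ((n-1)*φ))).const_mul (r ^ n))
  have hP2 := ((((hasDerivAt_id pr).mul_const (sin ((n-1)*φ))).sub_const
      (pφ / r * cos ((n-1)*φ))).const_mul (r ^ n))
  refine (((hP1.const_mul k2).const_add (2*k0*pφ)).sub (hP2.const_mul k1)).congr_deriv ?_
  ring

lemma hasDerivAt_Ja3p_phi :
    HasDerivAt (fun x => Ja3p n k0 k1 k2 r x pr pφ)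
      ((n-1) * r ^ n * (pφ / r * (k2 * cos ((n-1)*φ) - k1 * sin ((n-1)*φ))
        - pr * (k2 * sin ((n-1)*φ) + k1 * cos ((n-1)*φ)))) φ := by
  have hc := hasDerivAt_cos_mul_sub (n-1) 0 φ
  have hs := hasDerivAt_sin_mul_sub (n-1) 0 φ
  simp only [sub_zero] at hc hs
  have hP1 := ((hc.const_mul pr).add (hs.const_mul (pφ / r))).const_mul (r ^ n)
  have hP2 := ((hs.const_mul pr).sub (hc.const_mul (pφ / r))).const_mul (r ^ n)
  refine (((hP1.const_mul k2).const_add (2*k0*pφ)).sub (hP2.const_mul k1)).congr_deriv ?_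
  ring

lemma hasDerivAt_Ja3p_pphi :
    HasDerivAt (fun x => Ja3p n k0 k1 k2 r φ pr x)
      (2 * k0 + r ^ n / r * (k2 * sin ((n-1)*φ) + k1 * cos ((n-1)*φ))) pφ := by
  have hdiv := (hasDerivAt_id pφ).div_const r
  have hP1 := ((hdiv.mul_const (sin ((n-1)*φ))).const_add (pr * cos ((n-1)*φ))).const_mul (r ^ n)
  have hP2 := ((hdiv.mul_const (cos ((n-1)*φ))).const_sub (pr * sin ((n-1)*φ))).const_mul (r ^ n)
  refine ((((hasDerivAt_id pφ).const_mul (2*k0)).add (hP1.const_mul k2)).sub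
    (hP2.const_mul k1)).congr_deriv ?_
  ring

lemma hasDerivAt_rotJ_r (hr : 0 < r) :
    HasDerivAt (fun x => rotJ n k0 k1 k2 ψ x φ pr pφ)
      (2 * (n-1) / r * (r ^ (2*(n-1)) * ((r^2 * pr^2 - pφ^2) * cos (2*(n-1)*φ - ψ)
          + 2 * r * pr * pφ * sin (2*(n-1)*φ - ψ))
        - 2 * k0 / r ^ (2*(n-1)) * cos (2*(n-1)*φ - ψ)
        - (k1 * cos ((n-1)*φ - ψ) - k2 * sin ((n-1)*φ - ψ)) / r ^ (n-1))
      + 2 * pr * r ^ (2*(n-1)) * (r * pr * cos (2*(n-1)*φ - ψ) + pφ * sin (2*(n-1)*φ - ψ)))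
      r := by
  have hpow2 := hasDerivAt_rpow_const_of_pos (a := 2*(n-1)) hr
  have hpow1 := hasDerivAt_rpow_const_of_pos (a := n-1) hr
  have hne₂ : r ^ (2*(n-1)) ≠ 0 := (rpow_pos_of_pos hr _).ne'
  have hne₁ : r ^ (n-1) ≠ 0 := (rpow_pos_of_pos hr _).ne'
  have hQ := ((((hasDerivAt_pow 2 r).mul_const (pr^2)).sub_const (pφ^2)).mul_const
      (cos (2*(n-1)*φ - ψ))).add
    (((((hasDerivAt_id r).const_mul 2).mul_const pr).mul_const pφ).mul_const
      (sin (2*(n-1)*φ - ψ)))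
  have hK0 := ((hasDerivAt_const r (2*k0)).div hpow2 hne₂).mul_const (cos (2*(n-1)*φ - ψ))
  have hK12 := ((hasDerivAt_const r 2).div hpow1 hne₁).mul_const
    (k1 * cos ((n-1)*φ - ψ) - k2 * sin ((n-1)*φ - ψ))
  refine ((hpow2.mul hQ).add hK0 |>.add hK12).congr_deriv ?_
  simp only [Pi.add_apply, id]
  field_simp
  ring

lemma hasDerivAt_rotJ_pr :
    HasDerivAt (fun x => rotJ n k0 k1 k2 ψ r φ x pφ)
      (2 * r * r ^ (2*(n-1)) * (r * pr * cos (2*(n-1)*φ - ψ) + pφ * sin (2*(n-1)*φ - ψ)))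
      pr := by
  have hQ := (((hasDerivAt_pow 2 pr).const_mul (r^2)).sub_const (pφ^2)).mul_const
      (cos (2*(n-1)*φ - ψ)) |>.add
    ((((hasDerivAt_id pr).const_mul (2*r)).mul_const pφ).mul_const (sin (2*(n-1)*φ - ψ)))
  refine (((hQ.const_mul (r ^ (2*(n-1)))).add_const _).add_const _).congr_deriv ?_
  ring

lemma hasDerivAt_rotJ_phi :
    HasDerivAt (fun x => rotJ n k0 k1 k2 ψ r x pr pφ)
      (2 * (n-1) * (r ^ (2*(n-1)) * (2 * r * pr * pφ * cos (2*(n-1)*φ - ψ)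
          - (r^2 * pr^2 - pφ^2) * sin (2*(n-1)*φ - ψ))
        - 2 * k0 / r ^ (2*(n-1)) * sin (2*(n-1)*φ - ψ)
        - (k1 * sin ((n-1)*φ - ψ) + k2 * cos ((n-1)*φ - ψ)) / r ^ (n-1))) φ := by
  have hc2 := hasDerivAt_cos_mul_sub (2*(n-1)) ψ φ
  have hs2 := hasDerivAt_sin_mul_sub (2*(n-1)) ψ φ
  have hc := hasDerivAt_cos_mul_sub (n-1) ψ φ
  have hs := hasDerivAt_sin_mul_sub (n-1) ψ φ
  have hQ := ((hc2.const_mul (r^2 * pr^2 - pφ^2)).add (hs2.const_mul (2 * r * pr * pφ))).const_mul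
    (r ^ (2*(n-1)))
  have hK0 := hc2.const_mul (2*k0 / r ^ (2*(n-1)))
  have hK12 := ((hc.const_mul k1).sub (hs.const_mul k2)).const_mul (2 / r ^ (n-1))
  refine ((hQ.add hK0).add hK12).congr_deriv ?_
  ring

lemma hasDerivAt_rotJ_pphi :
    HasDerivAt (fun x => rotJ n k0 k1 k2 ψ r φ pr x)
      (2 * r ^ (2*(n-1)) * (r * pr * sin (2*(n-1)*φ - ψ) - pφ * cos (2*(n-1)*φ - ψ))) pφ := by
  have hQ := (((hasDerivAt_pow 2 pφ).const_sub (r^2 * pr^2)).mul_const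
      (cos (2*(n-1)*φ - ψ))).add
    (((hasDerivAt_id pφ).const_mul (2 * r * pr)).mul_const (sin (2*(n-1)*φ - ψ)))
  refine (((hQ.const_mul (r ^ (2*(n-1)))).add_const _).add_const _).congr_deriv ?_
  ring

theorem pb_Ja3p_rotJ (hr : 0 < r) :
    pb (Ja3p n k0 k1 k2) (rotJ n k0 k1 k2 ψ) r φ pr pφ
      = 2 * (n-1) * (2 * k0 * rotJ n k0 k1 k2 (ψ + π / 2) r φ pr pφ
          + 2 * k1 * k2 * cos ψ - (k1^2 - k2^2) * sin ψ) := by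
  rw [pb, (hasDerivAt_Ja3p_r hr).deriv, hasDerivAt_Ja3p_pr.deriv, hasDerivAt_Ja3p_phi.deriv,
    hasDerivAt_Ja3p_pphi.deriv, (hasDerivAt_rotJ_r hr).deriv, hasDerivAt_rotJ_pr.deriv,
    hasDerivAt_rotJ_phi.deriv, hasDerivAt_rotJ_pphi.deriv]
  simp only [rotJ, sub_add_eq_sub_sub, cos_sub_pi_div_two, sin_sub_pi_div_two]
  rw [rpow_eq_rpow_sub_one_mul hr.ne' n, rpow_two_mul hr.le]
  have ht : r ^ (n-1) ≠ 0 := (rpow_pos_of_pos hr _).ne'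
  have hcos_shift : cos (2*(n-1)*φ - ψ) * cos ((n-1)*φ) + sin (2*(n-1)*φ - ψ) * sin ((n-1)*φ)
      = cos ((n-1)*φ - ψ) := by
    rw [← cos_sub]; ring_nf
  have hsin_shift : sin (2*(n-1)*φ - ψ) * cos ((n-1)*φ) - cos (2*(n-1)*φ - ψ) * sin ((n-1)*φ)
      = sin ((n-1)*φ - ψ) := by
    rw [← sin_sub]; ring_nf
  have hcos_ψ : cos ((n-1)*φ) * cos ((n-1)*φ - ψ) + sin ((n-1)*φ) * sin ((n-1)*φ - ψ)
      = cos ψ := by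
    rw [← cos_sub]; ring_nf
  have hsin_ψ : sin ((n-1)*φ - ψ) * cos ((n-1)*φ) - cos ((n-1)*φ - ψ) * sin ((n-1)*φ)
      = -sin ψ := by
    rw [← sin_sub, ← sin_neg]; ring_nf
  linear_combination (norm := skip)
    (4 * (n-1) * k0 / r ^ (n-1)) * (k2 * hcos_shift + k1 * hsin_shift)
    + 2 * (n-1) * (2 * k1 * k2 * hcos_ψ + (k1^2 - k2^2) * hsin_ψ)
  field_simp
  ring

end PoissonBrackets

/-- Poisson brackets of the linear integral J_a3' with J₂ and J₃ on Ω = {r > 0}: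
{J_a3', J₂} = 4(n−1)(k₀ J₃ + k₁k₂) and {J_a3', J₃} = −2(n−1)(2k₀ J₂ + k₁² − k₂²). -/
theorem Ja3p_brackets (n k0 k1 k2 : ℝ) :
    ∀ r φ pr pφ : ℝ, 0 < r →
      pb (Ja3p n k0 k1 k2) (J2fun n k0 k1 k2) r φ pr pφ
        = 4 * (n-1) * (k0 * J3fun n k0 k1 k2 r φ pr pφ + k1 * k2) ∧
      pb (Ja3p n k0 k1 k2) (J3fun n k0 k1 k2) r φ pr pφ
        = -2 * (n-1) * (2 * k0 * J2fun n k0 k1 k2 r φ pr pφ + k1^2 - k2^2) := by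
  intro r φ pr pφ hr
  rw [J2fun_eq_rotJ, J3fun_eq_rotJ, pb_Ja3p_rotJ hr, pb_Ja3p_rotJ hr, zero_add, add_halves,
    rotJ_pi, cos_zero, sin_zero, cos_pi_div_two, sin_pi_div_two]
  constructor <;> ring
end

section
/- Let n ∈ ℝ, k_n = n − 1, m_n = (3n − 1)/2, and k₀, k₁, k₂ ∈ ℝ. Consider the Kepler-related Hamiltonian H_nd = T_n + k₀ r^{k_n} + r^{k_n/2}(k₁ cos(k_n φ/2) + k₂ sin(k_n φ/2)) on Ω = {r > 0}. Define the complex functions A_n = A_{n1} + i A_{n2}, with A_{n1} = r^{n−1} p_φ² + k₀ and A_{n2} = (1/r^{k_n/2})(r^{m_n} p_r p_φ + k₁ sin(k_n φ/2) − k₂ cos(k_n φ/2)), and N_φ = cos(k_n φ) + i sin(k_n φ). Then at every point of Ω: {A_n, H_nd} = −i (n − 1) λ_n A_n and {N_φ, H_nd} = i (n − 1) λ_n N_φ, where λ_n = r^{2(n−1)} p_φ. -/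
open Real

/-- The Kepler-related Hamiltonian
H_nd = T_n + k₀ r^(k_n) + r^(k_n/2)(k₁ cos(k_n φ/2) + k₂ sin(k_n φ/2)),
regarded as a complex-valued function. -/
noncomputable def HndC (n k0 k1 k2 : ℝ) (r φ pr pφ : ℝ) : ℂ :=
  ((Tkin n r φ pr pφ + k0 * r ^ (n-1)
    + r ^ ((n-1)/2) * (k1 * cos ((n-1)*φ/2) + k2 * sin ((n-1)*φ/2)) : ℝ) : ℂ)

/-- The complex function A_n = A_{n1} + i A_{n2}, with A_{n1} = r^(n−1) p_φ² + k₀ and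
A_{n2} = (1/r^(k_n/2))(r^(m_n) p_r p_φ + k₁ sin(k_n φ/2) − k₂ cos(k_n φ/2)),
m_n = (3n−1)/2. -/
noncomputable def An (n k0 k1 k2 : ℝ) (r φ pr pφ : ℝ) : ℂ :=
  ((r ^ (n-1) * pφ^2 + k0 : ℝ) : ℂ)
    + Complex.I * (((1 / r ^ ((n-1)/2)) *
        (r ^ ((3*n-1)/2) * pr * pφ + k1 * sin ((n-1)*φ/2) - k2 * cos ((n-1)*φ/2)) : ℝ) : ℂ)

/-- The complex function N_φ = cos(k_n φ) + i sin(k_n φ). -/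
noncomputable def Nphi (n : ℝ) (r φ pr pφ : ℝ) : ℂ :=
  ((cos ((n-1)*φ) : ℝ) : ℂ) + Complex.I * ((sin ((n-1)*φ) : ℝ) : ℂ)

/-! Write A_n = A_{n1} + i A_{n2} and N_φ = cos(k_n φ) + i sin(k_n φ) with real parts. Since H_nd
is real, {F₁ + i F₂, H} = {F₁, H} + i {F₂, H}, so {F, H} = i ω F amounts to the pair of real
identities {F₁, H} = -ω F₂ and {F₂, H} = ω F₁. These are checked from the partial derivatives:
every power of r that occurs is t^k r^j with t = r^{(n-1)/2} and k, j ∈ ℕ, so after substituting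
t both identities become rational identities in t and r. -/

open Complex (I)

structure HasPartialDerivs (F : ℝ → ℝ → ℝ → ℝ → ℝ) (r φ pr pφ Fr Fφ Fpr Fpφ : ℝ) : Prop where
  dr : HasDerivAt (F · φ pr pφ) Fr r
  dφ : HasDerivAt (F r · pr pφ) Fφ φ
  dpr : HasDerivAt (F r φ · pφ) Fpr pr
  dpφ : HasDerivAt (F r φ pr ·) Fpφ pφ

theorem pbC_ofReal_add_I_mul_eq_I_mul {F₁ F₂ H : ℝ → ℝ → ℝ → ℝ → ℝ}
    {r φ pr pφ a b c d a' b' c' d' Hr Hφ Hpr Hpφ ω : ℝ}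
    (h₁ : HasPartialDerivs F₁ r φ pr pφ a b c d) (h₂ : HasPartialDerivs F₂ r φ pr pφ a' b' c' d')
    (hH : HasPartialDerivs H r φ pr pφ Hr Hφ Hpr Hpφ)
    (e₁ : a * Hpr - c * Hr + b * Hpφ - d * Hφ = -ω * F₂ r φ pr pφ)
    (e₂ : a' * Hpr - c' * Hr + b' * Hpφ - d' * Hφ = ω * F₁ r φ pr pφ) :
    pbC (fun r φ pr pφ => (F₁ r φ pr pφ : ℂ) + I * F₂ r φ pr pφ)
        (fun r φ pr pφ => (H r φ pr pφ : ℂ)) r φ pr pφ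
      = I * ω * ((F₁ r φ pr pφ : ℂ) + I * F₂ r φ pr pφ) := by
  have hF {x₀ u v : ℝ} {f g : ℝ → ℝ} (hf : HasDerivAt f u x₀) (hg : HasDerivAt g v x₀) :
      deriv (fun x => (f x : ℂ) + I * g x) x₀ = u + I * v :=
    (hf.ofReal_comp.add (hg.ofReal_comp.const_mul I)).deriv
  rw [pbC, hF h₁.dr h₂.dr, hF h₁.dφ h₂.dφ, hF h₁.dpr h₂.dpr, hF h₁.dpφ h₂.dpφ,
    hH.dr.ofReal_comp.deriv, hH.dφ.ofReal_comp.deriv, hH.dpr.ofReal_comp.deriv,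
    hH.dpφ.ofReal_comp.deriv]
  apply_fun ((↑) : ℝ → ℂ) at e₁ e₂
  push_cast at e₁ e₂
  linear_combination e₁ + I * e₂ - ω * F₂ r φ pr pφ * Complex.I_sq

theorem rpow_eq_pow_mul_pow_of_eq {r s t : ℝ} (hr : 0 < r) (ht : r ^ s = t) (p : ℝ) (k j : ℕ)
    (hp : p = s * k + j) : r ^ p = t ^ k * r ^ j := by
  rw [hp, Real.rpow_add hr, Real.rpow_mul_natCast hr.le, ht, Real.rpow_natCast]

theorem hasDerivAt_rpow_of_eq {r s t : ℝ} (hr : 0 < r) (ht : r ^ s = t) (p : ℝ) (k j : ℕ)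
    (hp : p = s * k + j) : HasDerivAt (· ^ p) (p * t ^ k * r ^ j / r) r := by
  refine (Real.hasDerivAt_rpow_const (Or.inl hr.ne')).congr_deriv ?_
  rw [Real.rpow_sub_one hr.ne', rpow_eq_pow_mul_pow_of_eq hr ht p k j hp]
  ring

noncomputable def Hnd (n k0 k1 k2 : ℝ) : ℝ → ℝ → ℝ → ℝ → ℝ := fun r φ pr pφ =>
  Tkin n r φ pr pφ + k0 * r ^ (n-1) + r ^ ((n-1)/2) * (k1 * cos ((n-1)*φ/2) + k2 * sin ((n-1)*φ/2))

noncomputable def An1 (n k0 : ℝ) : ℝ → ℝ → ℝ → ℝ → ℝ := fun r _ _ pφ => r ^ (n-1) * pφ^2 + k0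

noncomputable def An2 (n k1 k2 : ℝ) : ℝ → ℝ → ℝ → ℝ → ℝ := fun r φ pr pφ =>
  1 / r ^ ((n-1)/2) * (r ^ ((3*n-1)/2) * pr * pφ + k1 * sin ((n-1)*φ/2) - k2 * cos ((n-1)*φ/2))

theorem HndC_eq_ofReal_Hnd (n k0 k1 k2 : ℝ) :
    HndC n k0 k1 k2 = fun r φ pr pφ => (Hnd n k0 k1 k2 r φ pr pφ : ℂ) := rfl

theorem An_eq_An1_add_I_mul_An2 (n k0 k1 k2 : ℝ) :
    An n k0 k1 k2 = fun r φ pr pφ => (An1 n k0 r φ pr pφ : ℂ) + I * An2 n k1 k2 r φ pr pφ := rfl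

theorem Nphi_eq_cos_add_I_mul_sin (n : ℝ) :
    Nphi n = fun _ φ _ _ => (cos ((n-1)*φ) : ℂ) + I * sin ((n-1)*φ) := rfl

section

variable {n r t : ℝ} (k0 k1 k2 φ pr pφ : ℝ)

theorem hasPartialDerivs_Hnd (hr : 0 < r) (ht : r ^ ((n-1)/2) = t) :
    HasPartialDerivs (Hnd n k0 k1 k2) r φ pr pφ
      (n*t^4*r*pr^2 + (n-1)*t^4*pφ^2/r + (n-1)*k0*t^2/r
        + (n-1)/2*t*(k1 * cos ((n-1)*φ/2) + k2 * sin ((n-1)*φ/2))/r)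
      ((n-1)/2*t*(k2 * cos ((n-1)*φ/2) - k1 * sin ((n-1)*φ/2)))
      (t^4*r^2*pr) (t^4*pφ) := by
  have h2n := rpow_eq_pow_mul_pow_of_eq hr ht (2*n) 4 2 (by push_cast; ring)
  have hθ := ((hasDerivAt_id' φ).const_mul (n-1)).div_const 2
  refine ⟨?_, ?_, ?_, ?_⟩
  · have hT := ((hasDerivAt_rpow_of_eq hr ht (2*n) 4 2 (by push_cast; ring)).const_mul (1/2)).mul
      (((hasDerivAt_const r (pφ^2)).div (hasDerivAt_pow 2 r) (pow_ne_zero 2 hr.ne')).const_add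
        (pr^2))
    refine ((hT.add ((hasDerivAt_rpow_of_eq hr ht (n-1) 2 0 (by push_cast; ring)).const_mul k0)).add
      ((hasDerivAt_rpow_of_eq hr ht ((n-1)/2) 1 0 (by push_cast; ring)).mul_const
        (k1 * cos ((n-1)*φ/2) + k2 * sin ((n-1)*φ/2)))).congr_deriv ?_
    rw [h2n, Pi.div_apply]
    field_simp
    ring
  · refine ((((hθ.cos.const_mul k1).add (hθ.sin.const_mul k2)).const_mul (r ^ ((n-1)/2))).const_add
      (Tkin n r φ pr pφ + k0 * r ^ (n-1))).congr_deriv ?_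
    rw [ht]
    ring
  · refine (((((hasDerivAt_pow 2 pr).add_const (pφ^2/r^2)).const_mul (1/2 * r ^ (2*n))).add_const
      _).add_const _).congr_deriv ?_
    rw [h2n]
    ring
  · refine (((((hasDerivAt_pow 2 pφ).div_const (r^2)).const_add (pr^2)).const_mul
      (1/2 * r ^ (2*n))).add_const _ |>.add_const _).congr_deriv ?_
    rw [h2n]
    field_simp
    ring

theorem hasPartialDerivs_An1 (hr : 0 < r) (ht : r ^ ((n-1)/2) = t) :
    HasPartialDerivs (An1 n k0) r φ pr pφ ((n-1)*t^2*pφ^2/r) 0 0 (2*t^2*pφ) := by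
  have hn1 := rpow_eq_pow_mul_pow_of_eq hr ht (n-1) 2 0 (by push_cast; ring)
  refine ⟨?_, hasDerivAt_const _ _, hasDerivAt_const _ _, ?_⟩
  · refine (((hasDerivAt_rpow_of_eq hr ht (n-1) 2 0 (by push_cast; ring)).mul_const
      (pφ^2)).add_const k0).congr_deriv ?_
    ring
  · refine (((hasDerivAt_pow 2 pφ).const_mul (r ^ (n-1))).add_const k0).congr_deriv ?_
    rw [hn1]
    push_cast
    ring

theorem hasPartialDerivs_An2 (hr : 0 < r) (ht : r ^ ((n-1)/2) = t) :
    HasPartialDerivs (An2 n k1 k2) r φ pr pφ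
      (n*t^2*pr*pφ - (n-1)/2*(k1 * sin ((n-1)*φ/2) - k2 * cos ((n-1)*φ/2))/(t*r))
      ((n-1)/2*(k1 * cos ((n-1)*φ/2) + k2 * sin ((n-1)*φ/2))/t)
      (t^2*r*pφ) (t^2*r*pr) := by
  have hm := rpow_eq_pow_mul_pow_of_eq hr ht ((3*n-1)/2) 3 1 (by push_cast; ring)
  have hr' : r ^ ((n-1)/2) ≠ 0 := (Real.rpow_pos_of_pos hr _).ne'
  have hθ := ((hasDerivAt_id' φ).const_mul (n-1)).div_const 2
  refine ⟨?_, ?_, ?_, ?_⟩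
  · have hinv := (hasDerivAt_const r (1:ℝ)).div
      (hasDerivAt_rpow_of_eq hr ht ((n-1)/2) 1 0 (by push_cast; ring)) hr'
    have hm' := hasDerivAt_rpow_of_eq hr ht ((3*n-1)/2) 3 1 (by push_cast; ring)
    refine (hinv.mul ((((hm'.mul_const pr).mul_const pφ).add_const _).sub_const _)).congr_deriv ?_
    simp only [hm, ht, Pi.div_apply]
    field_simp
    ring
  · refine ((((hθ.sin.const_mul k1).const_add _).sub (hθ.cos.const_mul k2)).const_mul
      (1 / r ^ ((n-1)/2))).congr_deriv ?_
    rw [ht]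
    field_simp
    ring
  · refine (((((hasDerivAt_id pr).const_mul (r ^ ((3*n-1)/2))).mul_const pφ).add_const _).sub_const
      _ |>.const_mul (1 / r ^ ((n-1)/2))).congr_deriv ?_
    rw [hm, ht]
    field_simp
  · refine ((((hasDerivAt_id pφ).const_mul (r ^ ((3*n-1)/2) * pr)).add_const _).sub_const
      _ |>.const_mul (1 / r ^ ((n-1)/2))).congr_deriv ?_
    rw [hm, ht]
    field_simp

end

theorem hasPartialDerivs_cos_mul (a r φ pr pφ : ℝ) :
    HasPartialDerivs (fun _ φ _ _ => cos (a * φ)) r φ pr pφ 0 (-(a * sin (a * φ))) 0 0 := by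
  refine ⟨hasDerivAt_const _ _, ?_, hasDerivAt_const _ _, hasDerivAt_const _ _⟩
  simpa [mul_comm] using ((hasDerivAt_id φ).const_mul a).cos

theorem hasPartialDerivs_sin_mul (a r φ pr pφ : ℝ) :
    HasPartialDerivs (fun _ φ _ _ => sin (a * φ)) r φ pr pφ 0 (a * cos (a * φ)) 0 0 := by
  refine ⟨hasDerivAt_const _ _, ?_, hasDerivAt_const _ _, hasDerivAt_const _ _⟩
  simpa [mul_comm] using ((hasDerivAt_id φ).const_mul a).sin

section

variable {n r : ℝ} (k0 k1 k2 φ pr pφ : ℝ)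

theorem pbC_An_HndC (hr : 0 < r) :
    pbC (An n k0 k1 k2) (HndC n k0 k1 k2) r φ pr pφ
      = -I * ((n-1 : ℝ) : ℂ) * ((r ^ (2*(n-1)) * pφ : ℝ) : ℂ) * An n k0 k1 k2 r φ pr pφ := by
  obtain ⟨t, ht⟩ : ∃ t, r ^ ((n-1)/2) = t := ⟨_, rfl⟩
  have hlam := rpow_eq_pow_mul_pow_of_eq hr ht (2*(n-1)) 4 0 (by push_cast; ring)
  have hm := rpow_eq_pow_mul_pow_of_eq hr ht ((3*n-1)/2) 3 1 (by push_cast; ring)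
  have hn1 := rpow_eq_pow_mul_pow_of_eq hr ht (n-1) 2 0 (by push_cast; ring)
  have h := pbC_ofReal_add_I_mul_eq_I_mul (ω := -((n-1) * (r ^ (2*(n-1)) * pφ)))
    (hasPartialDerivs_An1 k0 φ pr pφ hr ht) (hasPartialDerivs_An2 k1 k2 φ pr pφ hr ht)
    (hasPartialDerivs_Hnd k0 k1 k2 φ pr pφ hr ht) ?_ ?_
  · rw [An_eq_An1_add_I_mul_An2, HndC_eq_ofReal_Hnd, h]
    push_cast
    ring
  · simp only [An2, hlam, hm, ht]
    field_simp
    ring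
  · simp only [An1, hlam, hn1]
    field_simp
    ring

theorem pbC_Nphi_HndC (hr : 0 < r) :
    pbC (Nphi n) (HndC n k0 k1 k2) r φ pr pφ
      = I * ((n-1 : ℝ) : ℂ) * ((r ^ (2*(n-1)) * pφ : ℝ) : ℂ) * Nphi n r φ pr pφ := by
  obtain ⟨t, ht⟩ : ∃ t, r ^ ((n-1)/2) = t := ⟨_, rfl⟩
  have hlam := rpow_eq_pow_mul_pow_of_eq hr ht (2*(n-1)) 4 0 (by push_cast; ring)
  have h := pbC_ofReal_add_I_mul_eq_I_mul (ω := (n-1) * (r ^ (2*(n-1)) * pφ))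
    (hasPartialDerivs_cos_mul (n-1) r φ pr pφ) (hasPartialDerivs_sin_mul (n-1) r φ pr pφ)
    (hasPartialDerivs_Hnd k0 k1 k2 φ pr pφ hr ht) ?_ ?_
  · rw [Nphi_eq_cos_add_I_mul_sin, HndC_eq_ofReal_Hnd, h]
    push_cast
    ring
  · rw [hlam]
    ring
  · rw [hlam]
    ring

end

/-- {A_n, H_nd} = −i(n−1) λ_n A_n and {N_φ, H_nd} = i(n−1) λ_n N_φ,
with λ_n = r^(2(n−1)) p_φ, on Ω = {r > 0}. -/
theorem An_Nphi_brackets_Hnd (n k0 k1 k2 : ℝ) :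
    ∀ r φ pr pφ : ℝ, 0 < r →
      pbC (An n k0 k1 k2) (HndC n k0 k1 k2) r φ pr pφ
        = -Complex.I * ((n-1 : ℝ) : ℂ) * ((r ^ (2*(n-1)) * pφ : ℝ) : ℂ)
            * An n k0 k1 k2 r φ pr pφ ∧
      pbC (Nphi n) (HndC n k0 k1 k2) r φ pr pφ
        = Complex.I * ((n-1 : ℝ) : ℂ) * ((r ^ (2*(n-1)) * pφ : ℝ) : ℂ)
            * Nphi n r φ pr pφ :=
  fun _ φ pr pφ hr => ⟨pbC_An_HndC k0 k1 k2 φ pr pφ hr, pbC_Nphi_HndC k0 k1 k2 φ pr pφ hr⟩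
end
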